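/- arXiv:1407.1690 — 3 statements merged into one kernel-verified Lean document; each statement's English description precedes it below -/
import Mathlib

section
/- Let A be of C₀-class and z, z' ∈ ℂ with Im z' ≤ Im z. Then the operator U(A;z,z') defined on D_fin is closable, and its adjoint satisfies the inclusion U(A;z,z')* ⊇ closure of U(A*; (z')*, z*), where * on complex numbers denotes complex conjugation. -/
open MeasureTheory Complex Filter Set

noncomputable section

/-! ## Abstract setup

`FreeData 𝓗` records the spectral data of a non-negative self-adjoint operator `H₀` on a
complex Hilbert space `𝓗`: the spectral subspaces `V E = Ran E_{H₀}([0,E])`, (a linear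
extension of) the complex one-parameter group `W z = e^{izH₀}` and (a linear extension of)
`H₀` itself, together with their characterizing properties on the dense subspace
`D_fin = ⋃_{E ≥ 0} V E` of entire analytic vectors. -/

structure FreeData (𝓗 : Type*) [NormedAddCommGroup 𝓗] [InnerProductSpace ℂ 𝓗]
    [CompleteSpace 𝓗] where
  V : ℝ → Submodule ℂ 𝓗
  V_mono : Monotone V
  V_closed : ∀ E, IsClosed (V E : Set 𝓗)
  V_neg : ∀ E < (0:ℝ), V E = ⊥
  V_dense : Dense (⋃ E : ℝ, (V E : Set 𝓗))
  /-- (a linear extension of) the operator `e^{izH₀}`; only its action on `D_fin` matters -/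
  W : ℂ → 𝓗 →ₗ[ℂ] 𝓗
  /-- (a linear extension of) the operator `H₀`; only its action on `D_fin` matters -/
  H0 : 𝓗 →ₗ[ℂ] 𝓗
  W_zero : ∀ x, W 0 x = x
  W_mem : ∀ (z : ℂ) (E : ℝ), ∀ x ∈ V E, W z x ∈ V E
  W_add : ∀ (z w : ℂ) (E : ℝ), ∀ x ∈ V E, W z (W w x) = W (z + w) x
  W_norm : ∀ (z : ℂ) (E : ℝ), 0 ≤ E → ∀ x ∈ V E, ‖W z x‖ ≤ Real.exp (|z.im| * E) * ‖x‖
  W_inner_real : ∀ (t : ℝ) (E : ℝ), ∀ x ∈ V E, ∀ y ∈ V E,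
    (inner ℂ (W (t:ℂ) x) (W (t:ℂ) y) : ℂ) = inner ℂ x y
  H0_mem : ∀ E, ∀ x ∈ V E, H0 x ∈ V E
  H0_norm : ∀ E, 0 ≤ E → ∀ x ∈ V E, ‖H0 x‖ ≤ E * ‖x‖
  H0_symm : ∀ E, ∀ x ∈ V E, ∀ y ∈ V E, (inner ℂ (H0 x) y : ℂ) = inner ℂ x (H0 y)
  H0_nonneg : ∀ E, ∀ x ∈ V E, 0 ≤ (inner ℂ x (H0 x) : ℂ).re
  W_deriv : ∀ E, ∀ x ∈ V E, ∀ z : ℂ, HasDerivAt (fun w => W w x) (Complex.I • H0 (W z x)) z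

namespace FreeData

variable {𝓗 : Type*} [NormedAddCommGroup 𝓗] [InnerProductSpace ℂ 𝓗] [CompleteSpace 𝓗]

/-- `D_fin = ⋃_{E ≥ 0} Ran E_{H₀}([0,E])`. -/
def Dfin (F : FreeData 𝓗) : Set 𝓗 := ⋃ E ∈ Set.Ici (0:ℝ), (F.V E : Set 𝓗)

end FreeData

/-- A `C₀`-class operator relative to the free Hamiltonian data `F`:
`op` is (a linear extension of) the operator `A` with domain `dom`, and `adj` is
(a linear extension of) its adjoint `A*` with domain `domAdj`.  Conditions (I)–(III) of
the definition of the `C₀`-class are recorded: both `A` and `A*` are densely defined and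
closed, both are `H₀^{1/2}`-bounded (expressed through the spectral subspaces, with
`C = ‖A(H₀+1)^{-1/2}‖`), and both map `V E` into `V (E + b)`. -/
structure C0 {𝓗 : Type*} [NormedAddCommGroup 𝓗] [InnerProductSpace ℂ 𝓗] [CompleteSpace 𝓗]
    (F : FreeData 𝓗) where
  op : 𝓗 →ₗ[ℂ] 𝓗
  adj : 𝓗 →ₗ[ℂ] 𝓗
  dom : Submodule ℂ 𝓗
  domAdj : Submodule ℂ 𝓗
  dom_dense : Dense (dom : Set 𝓗)
  domAdj_dense : Dense (domAdj : Set 𝓗)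
  isClosed : IsClosed {p : 𝓗 × 𝓗 | p.1 ∈ dom ∧ p.2 = op p.1}
  isClosedAdj : IsClosed {p : 𝓗 × 𝓗 | p.1 ∈ domAdj ∧ p.2 = adj p.1}
  adjoint_spec : ∀ x ∈ dom, ∀ y ∈ domAdj, (inner ℂ (adj y) x : ℂ) = inner ℂ y (op x)
  Dfin_sub_dom : F.Dfin ⊆ dom
  Dfin_sub_domAdj : F.Dfin ⊆ domAdj
  C : ℝ
  C_nonneg : 0 ≤ C
  norm_bound : ∀ E, 0 ≤ E → ∀ x ∈ F.V E, ‖op x‖ ≤ C * Real.sqrt (E + 1) * ‖x‖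
  norm_boundAdj : ∀ E, 0 ≤ E → ∀ x ∈ F.V E, ‖adj x‖ ≤ C * Real.sqrt (E + 1) * ‖x‖
  b : ℝ
  b_nonneg : 0 ≤ b
  map_V : ∀ E, 0 ≤ E → ∀ x ∈ F.V E, op x ∈ F.V (E + b)
  map_VAdj : ∀ E, 0 ≤ E → ∀ x ∈ F.V E, adj x ∈ F.V (E + b)

namespace C0

variable {𝓗 : Type*} [NormedAddCommGroup 𝓗] [InnerProductSpace ℂ 𝓗] [CompleteSpace 𝓗]
variable {F : FreeData 𝓗}

/-- `A(z) = e^{izH₀} A e^{-izH₀}` (as a linear extension; only its values on `D_fin`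
matter). -/
def Az (A : C0 F) (z : ℂ) : 𝓗 →ₗ[ℂ] 𝓗 := F.W z ∘ₗ A.op ∘ₗ F.W (-z)

/-- `A*(z) = e^{izH₀} A* e^{-izH₀}`. -/
def AzStar (A : C0 F) (z : ℂ) : 𝓗 →ₗ[ℂ] 𝓗 := F.W z ∘ₗ A.adj ∘ₗ F.W (-z)

/-- `T(ζ,ζ') = e^{iζH₀} T e^{iζ'H₀}`. -/
def pair (A : C0 F) (ζ ζ' : ℂ) : 𝓗 → 𝓗 := fun x => F.W ζ (A.op (F.W ζ' x))

end C0

/-- The complex line integral `∫_{z'}^{z} f(ζ) dζ` (along the straight segment; for the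
analytic integrands appearing below it only depends on the endpoints). -/
def lineIntegral {𝓗 : Type*} [NormedAddCommGroup 𝓗] [NormedSpace ℂ 𝓗]
    (f : ℂ → 𝓗) (z' z : ℂ) : 𝓗 :=
  (z - z') • ∫ t in (0:ℝ)..1, f (z' + t • (z - z'))

/-- The iterated integrals
`Vₙ(Φ;z,z') = (-i)ⁿ ∫_{z'}^z dζ₁ ∫_{z'}^{ζ₁} dζ₂ ⋯ ∫_{z'}^{ζ_{n-1}} dζₙ Φ(ζ₁)⋯Φ(ζₙ)`,
defined through the recursion `V_{n+1}(z,z') = (-i) ∫_{z'}^z dζ Φ(ζ) Vₙ(ζ,z')`. -/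
def Vseq {𝓗 : Type*} [NormedAddCommGroup 𝓗] [NormedSpace ℂ 𝓗]
    (Φ : ℂ → 𝓗 → 𝓗) : ℕ → ℂ → ℂ → 𝓗 → 𝓗
  | 0 => fun _ _ x => x
  | n + 1 => fun z z' x =>
      (-Complex.I) • lineIntegral (fun ζ => Φ ζ (Vseq Φ n ζ z' x)) z' z

namespace C0

variable {𝓗 : Type*} [NormedAddCommGroup 𝓗] [InnerProductSpace ℂ 𝓗] [CompleteSpace 𝓗]
variable {F : FreeData 𝓗}

/-- `Vₙ(A;z,z')`. -/
def Vn (A : C0 F) : ℕ → ℂ → ℂ → 𝓗 → 𝓗 := Vseq (fun ζ x => A.Az ζ x)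

/-- `Vₙ(A*;z,z')`. -/
def VnStar (A : C0 F) : ℕ → ℂ → ℂ → 𝓗 → 𝓗 := Vseq (fun ζ x => A.AzStar ζ x)

/-- `U(A;z,z') = Σₙ Vₙ(A;z,z')` on `D_fin`. -/
def U (A : C0 F) (z z' : ℂ) : 𝓗 → 𝓗 := fun x => ∑' n : ℕ, A.Vn n z z' x

/-- `U(A*;z,z') = Σₙ Vₙ(A*;z,z')` on `D_fin`. -/
def Ustar (A : C0 F) (z z' : ℂ) : 𝓗 → 𝓗 := fun x => ∑' n : ℕ, A.VnStar n z z' x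

end C0

/-- The closure of the graph of (the restriction to `D` of) the map `f`;
`(x, y) ∈ graphClos D f` says that `y` is a value at `x` of the closure of `f ↾ D`. -/
def graphClos {𝓗 : Type*} [NormedAddCommGroup 𝓗]
    (D : Set 𝓗) (f : 𝓗 → 𝓗) : Set (𝓗 × 𝓗) :=
  closure {p : 𝓗 × 𝓗 | p.1 ∈ D ∧ p.2 = f p.1}

/-!
On `D_fin` everything is explicit. Conjugated by the free evolution, `Vₙ(A;z,z')x` has norm at
most `K Rⁿ / √n!`: each factor `A` costs `C √(energy + 1)` and the energy grows by `b` per step,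
so the series `U(A;z,z')x` converges for all `z, z'`. Parametrizing the iterated integrals along
the segment `ζ` from `z'` to `z`, the anti-diagonal sums
`∑_{k+m=n} ⟪Vₖ(A*; conj ζ, conj z) u, Vₘ(A; ζ, z') v⟫` do not depend on `ζ`, because
`A(ζ)* = A*(conj ζ)` on `D_fin`; comparing `ζ = z'` with `ζ = z` gives
`⟪U(A*; conj z', conj z) u, v⟫ = ⟪u, U(A;z,z') v⟫` for `u, v ∈ D_fin`. Closability of `U(A;z,z')`
and the inclusion of adjoints then follow by density of `D_fin`, passing to closures of graphs.
-/

open scoped InnerProductSpace ComplexConjugate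

section IntervalIntegralSubmodule

variable {X G G' : Type*} [TopologicalSpace X] [NormedAddCommGroup G] [NormedSpace ℂ G]
  [NormedAddCommGroup G'] [NormedSpace ℂ G']

lemma Continuous.linearMap_comp_of_bound_on {S : Submodule ℂ G} {T : G →ₗ[ℂ] G'} {c : ℝ}
    (hT : ∀ y ∈ S, ‖T y‖ ≤ c * ‖y‖) {f : X → G} (hf : Continuous f) (hfS : ∀ t, f t ∈ S) :
    Continuous fun t => T (f t) :=
  (LinearMap.mkContinuous (T ∘ₗ S.subtype) c fun y => hT y y.2).continuous.comp
    (hf.subtype_mk hfS)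

variable [CompleteSpace G]

lemma intervalIntegral_mem_of_isClosed {S : Submodule ℂ G} (hS : IsClosed (S : Set G))
    {f : ℝ → G} (hfS : ∀ u, f u ∈ S) (a b : ℝ) : (∫ u in a..b, f u) ∈ S := by
  have := hS.completeSpace_coe
  rw [show (fun u => f u) = fun u => S.subtypeₗᵢ ⟨f u, hfS u⟩ from rfl,
    LinearIsometry.intervalIntegral_comp_comm]
  exact SetLike.coe_mem _

lemma LinearMap.map_intervalIntegral_of_bound_on [CompleteSpace G'] {S : Submodule ℂ G}
    (hS : IsClosed (S : Set G)) {T : G →ₗ[ℂ] G'} {c : ℝ} (hT : ∀ y ∈ S, ‖T y‖ ≤ c * ‖y‖)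
    {f : ℝ → G} (hf : Continuous f) (hfS : ∀ u, f u ∈ S) (a b : ℝ) :
    T (∫ u in a..b, f u) = ∫ u in a..b, T (f u) := by
  have := hS.completeSpace_coe
  let g : ℝ → S := fun u => ⟨f u, hfS u⟩
  let T' : S →L[ℂ] G' := LinearMap.mkContinuous (T ∘ₗ S.subtype) c fun y => hT y y.2
  calc T (∫ u in a..b, f u) = T (S.subtypeₗᵢ (∫ u in a..b, g u)) := by
        rw [← LinearIsometry.intervalIntegral_comp_comm]; rfl
    _ = T' (∫ u in a..b, g u) := rfl
    _ = ∫ u in a..b, T (f u) :=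
        (T'.intervalIntegral_comp_comm ((hf.subtype_mk hfS).intervalIntegrable a b)).symm

end IntervalIntegralSubmodule

section Estimates

open Nat in
lemma summable_pow_div_sqrt_factorial (a : ℝ) : Summable fun n : ℕ => a ^ n / √(n ! : ℝ) := by
  refine Summable.of_norm_bounded ((Real.summable_pow_div_factorial (4 * a ^ 2)).add
    (summable_geometric_of_lt_one (by norm_num) (by norm_num : (1 / 4 : ℝ) < 1))) fun n => ?_
  have hf : (0 : ℝ) < n ! := by positivity
  -- `xy ≤ x² + y²` for `x = (2|a|)ⁿ/√n!` and `y = 2⁻ⁿ`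
  set x := (2 * |a|) ^ n / √(n ! : ℝ)
  set y := (1 / 2 : ℝ) ^ n
  have hxy : ‖a ^ n / √(n ! : ℝ)‖ = x * y := by
    rw [norm_div, norm_pow, Real.norm_eq_abs, Real.norm_of_nonneg (Real.sqrt_nonneg _),
      div_mul_eq_mul_div, ← mul_pow]
    ring_nf
  have hx : x ^ 2 = (4 * a ^ 2) ^ n / n ! := by
    rw [div_pow, Real.sq_sqrt hf.le, ← pow_mul, mul_comm n 2, pow_mul, mul_pow, sq_abs]
    norm_num
  have hy : y ^ 2 = (1 / 4) ^ n := by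
    rw [← pow_mul, mul_comm n 2, pow_mul]
    norm_num
  rw [hxy, ← hx, ← hy]
  nlinarith [sq_nonneg (x - y), sq_nonneg x, sq_nonneg y]

lemma norm_intervalIntegral_le_mul_pow {G : Type*} [NormedAddCommGroup G] [NormedSpace ℝ G]
    {f : ℝ → G} {K t : ℝ} (n : ℕ) (ht : 0 ≤ t) (hf : ∀ u ∈ Set.Icc 0 t, ‖f u‖ ≤ K * u ^ n) :
    ‖∫ u in (0:ℝ)..t, f u‖ ≤ K * (t ^ (n + 1) / (n + 1)) := by
  calc ‖∫ u in (0:ℝ)..t, f u‖ ≤ ∫ u in (0:ℝ)..t, K * u ^ n :=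
        intervalIntegral.norm_integral_le_of_norm_le ht
          (Filter.Eventually.of_forall fun u hu => hf u (Set.Ioc_subset_Icc_self hu))
          (by apply Continuous.intervalIntegrable; fun_prop)
    _ = K * (t ^ (n + 1) / (n + 1)) := by
        rw [intervalIntegral.integral_const_mul, integral_pow]
        simp

open Nat in
lemma mul_sqrt_mul_pow_div_sqrt_factorial_le {s e D : ℝ} {n : ℕ} (hs : 0 ≤ s) (hD : 0 ≤ D)
    (he : e ≤ D * (n + 1)) :
    s * √e * ((s * √D) ^ n / √(n ! : ℝ)) / (n + 1) ≤ (s * √D) ^ (n + 1) / √((n + 1)! : ℝ) := by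
  have hn : (0 : ℝ) < √((n : ℝ) + 1) := by positivity
  have hsqrt : √e / (n + 1) ≤ √D / √((n : ℝ) + 1) := by
    rw [div_le_div_iff₀ (by positivity) hn]
    calc √e * √((n : ℝ) + 1) ≤ √D * √((n : ℝ) + 1) * √((n : ℝ) + 1) := by
          gcongr
          rw [← Real.sqrt_mul hD]
          exact Real.sqrt_le_sqrt he
      _ = √D * (n + 1) := by rw [mul_assoc, Real.mul_self_sqrt (by positivity)]
  calc s * √e * ((s * √D) ^ n / √(n ! : ℝ)) / (n + 1)
      = s * ((s * √D) ^ n / √(n ! : ℝ)) * (√e / (n + 1)) := by ring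
    _ ≤ s * ((s * √D) ^ n / √(n ! : ℝ)) * (√D / √((n : ℝ) + 1)) := by gcongr
    _ = (s * √D) ^ (n + 1) / √((n + 1)! : ℝ) := by
        rw [Nat.factorial_succ, Nat.cast_mul, Real.sqrt_mul (by positivity)]
        push_cast
        ring

end Estimates

section Telescoping

open Finset

variable {𝕜 E : Type*} [RCLike 𝕜] [NormedAddCommGroup E] [InnerProductSpace 𝕜 E]
  [NormedSpace ℝ E]

lemma hasDerivAt_sum_antidiagonal_inner {f g f' g' : ℕ → ℝ → E} {t : ℝ}
    (hf : ∀ k, HasDerivAt (f k) (f' k t) t) (hg : ∀ m, HasDerivAt (g m) (g' m t) t)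
    (hf0 : f' 0 t = 0) (hg0 : g' 0 t = 0)
    (hfg : ∀ k m, ⟪f' (k + 1) t, g m t⟫_𝕜 + ⟪f k t, g' (m + 1) t⟫_𝕜 = 0) (n : ℕ) :
    HasDerivAt (fun s => ∑ q ∈ antidiagonal n, ⟪f q.1 s, g q.2 s⟫_𝕜) 0 t := by
  refine (HasDerivAt.fun_sum fun q _ => (hf q.1).inner 𝕜 (hg q.2)).congr_deriv ?_
  cases n with
  | zero => simp [hf0, hg0]
  | succ n =>
    rw [sum_add_distrib, Nat.sum_antidiagonal_succ', Nat.sum_antidiagonal_succ, hf0, hg0,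
      inner_zero_left, inner_zero_right, zero_add, zero_add, ← sum_add_distrib]
    exact sum_eq_zero fun q _ => by rw [add_comm]; exact hfg q.1 q.2

end Telescoping

section GraphClosure

lemma graphClos_subset_of_isClosed {𝓗 : Type*} [NormedAddCommGroup 𝓗] {D : Set 𝓗}
    {f : 𝓗 → 𝓗} {S : Set (𝓗 × 𝓗)} (hS : IsClosed S) (hf : ∀ x ∈ D, (x, f x) ∈ S) :
    graphClos D f ⊆ S :=
  closure_minimal (by rintro ⟨x, y⟩ ⟨hx, hy : y = f x⟩; exact hy ▸ hf x hx) hS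

variable {𝓗 : Type*} [NormedAddCommGroup 𝓗] [InnerProductSpace ℂ 𝓗] {D : Set 𝓗} {f g : 𝓗 → 𝓗}

lemma eq_of_mem_graphClos_of_inner (hfg : ∀ u ∈ D, ∀ v ∈ D, ⟪g u, v⟫_ℂ = ⟪u, f v⟫_ℂ)
    (hD : Dense D) {x y₁ y₂ : 𝓗} (h₁ : (x, y₁) ∈ graphClos D f)
    (h₂ : (x, y₂) ∈ graphClos D f) : y₁ = y₂ := by
  have key : ∀ y, (x, y) ∈ graphClos D f → ∀ u ∈ D, ⟪u, y⟫_ℂ = ⟪g u, x⟫_ℂ := fun y hy u hu =>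
    graphClos_subset_of_isClosed (S := {q | ⟪u, q.2⟫_ℂ = ⟪g u, q.1⟫_ℂ})
      (isClosed_eq (by fun_prop) (by fun_prop)) (fun v hv => (hfg u hu v hv).symm) hy
  exact hD.eq_of_inner_right ℂ fun u hu => (key y₁ h₁ u hu).trans (key y₂ h₂ u hu).symm

lemma inner_eq_of_mem_graphClos_of_inner (hfg : ∀ u ∈ D, ∀ v ∈ D, ⟪g u, v⟫_ℂ = ⟪u, f v⟫_ℂ)
    {y w : 𝓗} (hyw : (y, w) ∈ graphClos D g) {x : 𝓗} (hx : x ∈ D) :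
    ⟪y, f x⟫_ℂ = ⟪w, x⟫_ℂ :=
  graphClos_subset_of_isClosed (S := {q | ⟪q.1, f x⟫_ℂ = ⟪q.2, x⟫_ℂ})
    (isClosed_eq (by fun_prop) (by fun_prop)) (fun u hu => (hfg u hu x hx).symm) hyw

end GraphClosure

namespace FreeData

variable {𝓗 : Type*} [NormedAddCommGroup 𝓗] [InnerProductSpace ℂ 𝓗] [CompleteSpace 𝓗]
variable (F : FreeData 𝓗)

lemma W_neg_cancel {E : ℝ} {x : 𝓗} (hx : x ∈ F.V E) (z : ℂ) : F.W z (F.W (-z) x) = x := by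
  rw [F.W_add z (-z) E x hx, add_neg_cancel, F.W_zero]

lemma mem_Dfin {E : ℝ} (hE : 0 ≤ E) {x : 𝓗} (hx : x ∈ F.V E) : x ∈ F.Dfin :=
  Set.mem_biUnion (Set.mem_Ici.2 hE) hx

lemma exists_mem_V_of_mem_Dfin {x : 𝓗} (hx : x ∈ F.Dfin) : ∃ E, 0 ≤ E ∧ x ∈ F.V E := by
  simpa [Dfin] using hx

lemma W_mem_Dfin (z : ℂ) {x : 𝓗} (hx : x ∈ F.Dfin) : F.W z x ∈ F.Dfin := by
  obtain ⟨E, hE, hx⟩ := F.exists_mem_V_of_mem_Dfin hx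
  exact F.mem_Dfin hE (F.W_mem z E x hx)

lemma dense_Dfin : Dense F.Dfin := by
  refine F.V_dense.mono (Set.iUnion_subset fun E x hx => ?_)
  rcases le_or_gt 0 E with hE | hE
  · exact F.mem_Dfin hE hx
  · rw [F.V_neg E hE, Submodule.bot_coe, Set.mem_singleton_iff] at hx
    exact hx ▸ F.mem_Dfin le_rfl (zero_mem _)

lemma continuous_W_apply {E : ℝ} {x : 𝓗} (hx : x ∈ F.V E) : Continuous fun z => F.W z x :=
  continuous_iff_continuousAt.2 fun z => (F.W_deriv E x hx z).continuousAt

lemma continuous_W_comp {X : Type*} [TopologicalSpace X] {E : ℝ} (hE : 0 ≤ E) {α : X → ℂ}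
    (hα : Continuous α) {f : X → 𝓗} (hf : Continuous f) (hfS : ∀ t, f t ∈ F.V E) :
    Continuous fun t => F.W (α t) (f t) := by
  refine continuous_iff_continuousAt.2 fun t₀ => ?_
  have hsmall : Tendsto (fun t => F.W (α t) (f t - f t₀)) (nhds t₀) (nhds 0) := by
    refine squeeze_zero_norm (fun t => F.W_norm _ E hE _ (sub_mem (hfS t) (hfS t₀))) ?_
    have : Continuous fun t => Real.exp (|(α t).im| * E) * ‖f t - f t₀‖ := by fun_prop
    simpa using this.tendsto t₀
  have := hsmall.add (((F.continuous_W_apply (hfS t₀)).comp hα).tendsto t₀)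
  simp only [zero_add, Function.comp_apply, ← map_add, sub_add_cancel] at this
  exact this

lemma inner_W_conj_W {q a : 𝓗} (hq : q ∈ F.Dfin) (ha : a ∈ F.Dfin) (w : ℂ) :
    ⟪F.W (conj w) q, F.W w a⟫_ℂ = ⟪q, a⟫_ℂ := by
  obtain ⟨E₁, -, hq⟩ := F.exists_mem_V_of_mem_Dfin hq
  obtain ⟨E₂, -, ha⟩ := F.exists_mem_V_of_mem_Dfin ha
  have hq' := F.V_mono (le_max_left E₁ E₂) hq
  have ha' := F.V_mono (le_max_right E₁ E₂) ha
  have hlin : ∀ (c : ℂ) (r : ℝ), HasDerivAt (fun r : ℝ => (r : ℂ) * c) c r := fun c r => by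
    simpa using (hasDerivAt_id r).ofReal_comp.mul_const c
  -- The derivative along the ray `r ↦ r w` vanishes because `H₀` is symmetric.
  have hderiv : ∀ r : ℝ,
      HasDerivAt (fun r : ℝ => ⟪F.W ((r : ℂ) * conj w) q, F.W ((r : ℂ) * w) a⟫_ℂ) 0 r := by
    intro r
    have h := (HasDerivAt.scomp r (F.W_deriv _ q hq' _) (hlin (conj w) r)).inner ℂ
      (HasDerivAt.scomp r (F.W_deriv _ a ha' _) (hlin w r))
    refine h.congr_deriv ?_
    simp only [Function.comp_apply]
    rw [inner_smul_left, inner_smul_left, inner_smul_right, inner_smul_right,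
      F.H0_symm _ _ (F.W_mem _ _ _ hq') _ (F.W_mem _ _ _ ha')]
    simp only [Complex.conj_conj, Complex.conj_I]
    ring
  have := is_const_of_deriv_eq_zero (fun r => (hderiv r).differentiableAt)
    (fun r => (hderiv r).deriv) 1 0
  simpa [F.W_zero] using this

lemma inner_W_left {u v : 𝓗} (hu : u ∈ F.Dfin) (hv : v ∈ F.Dfin) (z : ℂ) :
    ⟪F.W z u, v⟫_ℂ = ⟪u, F.W (-conj z) v⟫_ℂ := by
  obtain ⟨E, -, hv'⟩ := F.exists_mem_V_of_mem_Dfin hv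
  have h := F.inner_W_conj_W hu (F.W_mem_Dfin (-conj z) hv) (conj z)
  rwa [Complex.conj_conj, F.W_neg_cancel hv'] at h

end FreeData

namespace C0

variable {𝓗 : Type*} [NormedAddCommGroup 𝓗] [InnerProductSpace ℂ 𝓗] [CompleteSpace 𝓗]
variable {F : FreeData 𝓗}

/-- The `C₀`-class operator `A*`, whose adjoint is `A`. -/
def flip (A : C0 F) : C0 F where
  op := A.adj
  adj := A.op
  dom := A.domAdj
  domAdj := A.dom
  dom_dense := A.domAdj_dense
  domAdj_dense := A.dom_dense
  isClosed := A.isClosedAdj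
  isClosedAdj := A.isClosed
  adjoint_spec x hx y hy := by
    rw [← inner_conj_symm, ← A.adjoint_spec y hy x hx, inner_conj_symm]
  Dfin_sub_dom := A.Dfin_sub_domAdj
  Dfin_sub_domAdj := A.Dfin_sub_dom
  C := A.C
  C_nonneg := A.C_nonneg
  norm_bound := A.norm_boundAdj
  norm_boundAdj := A.norm_bound
  b := A.b
  b_nonneg := A.b_nonneg
  map_V := A.map_VAdj
  map_VAdj := A.map_V

variable (A : C0 F)

lemma flip_Vn : A.flip.Vn = A.VnStar := rfl

lemma op_mem_Dfin {x : 𝓗} (hx : x ∈ F.Dfin) : A.op x ∈ F.Dfin := by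
  obtain ⟨E, hE, hx⟩ := F.exists_mem_V_of_mem_Dfin hx
  exact F.mem_Dfin (add_nonneg hE A.b_nonneg) (A.map_V E hE x hx)

lemma adj_mem_Dfin {x : 𝓗} (hx : x ∈ F.Dfin) : A.adj x ∈ F.Dfin :=
  A.flip.op_mem_Dfin hx

lemma Az_mem {E : ℝ} (hE : 0 ≤ E) (ζ : ℂ) {x : 𝓗} (hx : x ∈ F.V E) :
    A.Az ζ x ∈ F.V (E + A.b) :=
  F.W_mem _ _ _ (A.map_V E hE _ (F.W_mem _ _ _ hx))

lemma inner_flip_Az_conj {u v : 𝓗} (hu : u ∈ F.Dfin) (hv : v ∈ F.Dfin) (ζ : ℂ) :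
    ⟪A.flip.Az (conj ζ) u, v⟫_ℂ = ⟪u, A.Az ζ v⟫_ℂ := by
  have hu' := F.W_mem_Dfin (-conj ζ) hu
  have hv' := F.W_mem_Dfin (-ζ) hv
  calc ⟪F.W (conj ζ) (A.adj (F.W (-conj ζ) u)), v⟫_ℂ
      = ⟪A.adj (F.W (-conj ζ) u), F.W (-ζ) v⟫_ℂ := by
        rw [F.inner_W_left (A.adj_mem_Dfin hu') hv, Complex.conj_conj]
    _ = ⟪F.W (-conj ζ) u, A.op (F.W (-ζ) v)⟫_ℂ :=
        A.adjoint_spec _ (A.Dfin_sub_dom hv') _ (A.Dfin_sub_domAdj hu')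
    _ = ⟪u, F.W ζ (A.op (F.W (-ζ) v))⟫_ℂ := by
        rw [F.inner_W_left hu (A.op_mem_Dfin hv'), map_neg, Complex.conj_conj, neg_neg]

lemma continuous_Az_comp {X : Type*} [TopologicalSpace X] {E : ℝ} (hE : 0 ≤ E) {α : X → ℂ}
    (hα : Continuous α) {f : X → 𝓗} (hf : Continuous f) (hfS : ∀ t, f t ∈ F.V E) :
    Continuous fun t => A.Az (α t) (f t) := by
  have hW := F.continuous_W_comp hE hα.neg hf hfS
  have hWS : ∀ t, F.W (-α t) (f t) ∈ F.V E := fun t => F.W_mem _ _ _ (hfS t)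
  have hAW : Continuous fun t => A.op (F.W (-α t) (f t)) :=
    hW.linearMap_comp_of_bound_on (c := A.C * √(E + 1))
      (fun y hy => by simpa only [mul_assoc] using A.norm_bound E hE y hy) hWS
  exact F.continuous_W_comp (add_nonneg hE A.b_nonneg) hα hAW
    fun t => A.map_V E hE _ (hWS t)

section Ray

/-- `Vₙ(A; p + t d, p) x` as a function of the real parameter `t` (see `rayV_eq_Vn`). -/
def rayV (A : C0 F) (p d : ℂ) (x : 𝓗) : ℕ → ℝ → 𝓗
  | 0 => fun _ => x
  | n + 1 => fun t => (-I * d) • ∫ u in (0:ℝ)..t, A.Az (p + u * d) (A.rayV p d x n u)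

def rayVDeriv (A : C0 F) (p d : ℂ) (x : 𝓗) : ℕ → ℝ → 𝓗
  | 0 => fun _ => 0
  | n + 1 => fun t => (-I * d) • A.Az (p + t * d) (A.rayV p d x n t)

variable (p d : ℂ) {x : 𝓗}

lemma rayV_zero (x : 𝓗) (t : ℝ) : A.rayV p d x 0 t = x := rfl

lemma rayV_succ_zero (x : 𝓗) (n : ℕ) : A.rayV p d x (n + 1) 0 = 0 := by
  simp [rayV]

lemma rayV_mem {E : ℝ} (hE : 0 ≤ E) (hx : x ∈ F.V E) (n : ℕ) (t : ℝ) :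
    A.rayV p d x n t ∈ F.V (E + n * A.b) := by
  induction n generalizing t with
  | zero => simpa [rayV] using hx
  | succ n ih =>
    have hE' : 0 ≤ E + n * A.b := by have := A.b_nonneg; positivity
    rw [Nat.cast_succ, add_one_mul, ← add_assoc]
    exact Submodule.smul_mem _ _ (intervalIntegral_mem_of_isClosed (F.V_closed _)
      (fun u => A.Az_mem hE' _ (ih u)) 0 t)

lemma rayV_mem_Dfin {E : ℝ} (hE : 0 ≤ E) (hx : x ∈ F.V E) (n : ℕ) (t : ℝ) :
    A.rayV p d x n t ∈ F.Dfin :=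
  F.mem_Dfin (by have := A.b_nonneg; positivity) (A.rayV_mem p d hE hx n t)

lemma continuous_Az_rayV {E : ℝ} (hE : 0 ≤ E) (hx : x ∈ F.V E) (n : ℕ)
    (hcont : Continuous (A.rayV p d x n)) :
    Continuous fun u : ℝ => A.Az (p + u * d) (A.rayV p d x n u) :=
  A.continuous_Az_comp (by have := A.b_nonneg; positivity) (by fun_prop) hcont
    (A.rayV_mem p d hE hx n)

lemma continuous_rayV {E : ℝ} (hE : 0 ≤ E) (hx : x ∈ F.V E) (n : ℕ) :
    Continuous (A.rayV p d x n) := by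
  induction n with
  | zero => exact continuous_const
  | succ n ih =>
    exact (intervalIntegral.continuous_primitive (fun a b =>
      (A.continuous_Az_rayV p d hE hx n ih).intervalIntegrable a b) 0).const_smul _

lemma hasDerivAt_rayV {E : ℝ} (hE : 0 ≤ E) (hx : x ∈ F.V E) (n : ℕ) (t : ℝ) :
    HasDerivAt (A.rayV p d x n) (A.rayVDeriv p d x n t) t := by
  cases n with
  | zero => exact hasDerivAt_const t x
  | succ n =>
    exact ((A.continuous_Az_rayV p d hE hx n (A.continuous_rayV p d hE hx n)
      ).integral_hasStrictDerivAt 0 t).hasDerivAt.const_smul (-I * d)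

lemma rayV_eq_Vn (x : 𝓗) (n : ℕ) (t : ℝ) : A.rayV p d x n t = A.Vn n (p + t * d) p x := by
  induction n generalizing t with
  | zero => rfl
  | succ n ih =>
    have hint : (fun s : ℝ => A.Az (p + s • (t * d)) (A.Vn n (p + s • (t * d)) p x))
        = fun s : ℝ => A.Az (p + ((s * t : ℝ) : ℂ) * d) (A.rayV p d x n (s * t)) := by
      funext s
      rw [ih, Complex.real_smul]
      push_cast
      ring_nf
    have hscale := intervalIntegral.smul_integral_comp_mul_right
      (fun u => A.Az (p + (u : ℂ) * d) (A.rayV p d x n u)) t (a := 0) (b := 1)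
    simp only [zero_mul, one_mul] at hscale
    calc A.rayV p d x (n + 1) t
        = (-I * d) • (t • ∫ s in (0:ℝ)..1,
            A.Az (p + ((s * t : ℝ) : ℂ) * d) (A.rayV p d x n (s * t))) := by
          rw [hscale]; rfl
      _ = -I • lineIntegral (fun ζ => A.Az ζ (A.Vn n ζ p x)) p (p + t * d) := by
          rw [lineIntegral, add_sub_cancel_left, hint, ← Complex.coe_smul, smul_smul,
            smul_smul, mul_assoc, mul_comm d]
      _ = A.Vn (n + 1) (p + t * d) p x := rfl

lemma norm_W_neg_Az_le {E : ℝ} (hE : 0 ≤ E) {y : 𝓗} (hy : y ∈ F.V E) (ζ₁ ζ₂ : ℂ) :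
    ‖F.W (-ζ₂) (A.Az ζ₁ y)‖ ≤
      Real.exp (|(ζ₁ - ζ₂).im| * (E + A.b)) * (A.C * √(E + 1) * ‖F.W (-ζ₁) y‖) := by
  have hWy := F.W_mem (-ζ₁) E y hy
  have hq := A.map_V E hE _ hWy
  rw [show A.Az ζ₁ y = F.W ζ₁ (A.op (F.W (-ζ₁) y)) from rfl, F.W_add _ _ _ _ hq, neg_add_eq_sub]
  exact (F.W_norm _ _ (add_nonneg hE A.b_nonneg) _ hq).trans
    (mul_le_mul_of_nonneg_left (A.norm_bound E hE _ hWy) (Real.exp_pos _).le)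

/-- In the interaction picture `W(-(p + t d)) rayV` the growth factors `exp (|Im ζ| · energy)`
of the free evolutions combine by the group law instead of accumulating. -/
lemma norm_W_neg_rayV_succ_le (hE : 0 ≤ E) (hx : x ∈ F.V E) (n : ℕ) {κ t : ℝ} (hκ : 0 ≤ κ)
    (ht : 0 ≤ t)
    (ih : ∀ u ∈ Set.Icc 0 t, ‖F.W (-(p + u * d)) (A.rayV p d x n u)‖ ≤
      κ * (u ^ n * Real.exp (u * |d.im| * (E + n * A.b)))) :
    ‖F.W (-(p + t * d)) (A.rayV p d x (n + 1) t)‖ ≤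
      ‖d‖ * (A.C * √(E + n * A.b + 1) * κ * Real.exp (t * |d.im| * (E + (n + 1) * A.b)))
        * (t ^ (n + 1) / (n + 1)) := by
  have hEn : 0 ≤ E + n * A.b := by have := A.b_nonneg; positivity
  have hmem := A.rayV_mem p d hE hx n
  have hW : ∀ y ∈ F.V (E + n * A.b + A.b), ‖F.W (-(p + t * d)) y‖ ≤
      Real.exp (|(-(p + t * d)).im| * (E + n * A.b + A.b)) * ‖y‖ :=
    fun y hy => F.W_norm _ _ (add_nonneg hEn A.b_nonneg) y hy
  rw [rayV, map_smul, LinearMap.map_intervalIntegral_of_bound_on (F.V_closed _) hW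
    (A.continuous_Az_rayV p d hE hx n (A.continuous_rayV p d hE hx n))
    (fun u => A.Az_mem hEn _ (hmem u)), norm_smul, norm_mul, norm_neg, Complex.norm_I, one_mul,
    mul_assoc]
  refine mul_le_mul_of_nonneg_left
    (norm_intervalIntegral_le_mul_pow n ht fun u ⟨hu₀, hut⟩ => ?_) (norm_nonneg d)
  have him : |(p + u * d - (p + t * d)).im| = (t - u) * |d.im| := by
    have : (p + u * d - (p + t * d)).im = -((t - u) * d.im) := by simp; ring
    rw [this, abs_neg, abs_mul, abs_of_nonneg (sub_nonneg.2 hut)]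
  have hexp : Real.exp ((t - u) * |d.im| * (E + n * A.b + A.b)) *
      Real.exp (u * |d.im| * (E + n * A.b)) = Real.exp (t * |d.im| * (E + (n + 1) * A.b)) *
      Real.exp (-(u * |d.im| * A.b)) := by
    rw [← Real.exp_add, ← Real.exp_add]; ring_nf
  calc ‖F.W (-(p + t * d)) (A.Az (p + u * d) (A.rayV p d x n u))‖
      ≤ Real.exp ((t - u) * |d.im| * (E + n * A.b + A.b)) *
          (A.C * √(E + n * A.b + 1) * (κ * (u ^ n * Real.exp (u * |d.im| * (E + n * A.b))))) := by
        rw [← him]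
        refine (A.norm_W_neg_Az_le hEn (hmem u) _ _).trans ?_
        have := A.C_nonneg
        exact mul_le_mul_of_nonneg_left (mul_le_mul_of_nonneg_left (ih u ⟨hu₀, hut⟩)
          (by positivity)) (Real.exp_pos _).le
    _ = A.C * √(E + n * A.b + 1) * κ * Real.exp (t * |d.im| * (E + (n + 1) * A.b)) * u ^ n *
          Real.exp (-(u * |d.im| * A.b)) := by
        linear_combination (A.C * √(E + n * A.b + 1) * κ * u ^ n) * hexp
    _ ≤ A.C * √(E + n * A.b + 1) * κ * Real.exp (t * |d.im| * (E + (n + 1) * A.b)) * u ^ n := by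
        refine mul_le_of_le_one_right ?_ (Real.exp_le_one_iff.2 ?_)
        · have := A.C_nonneg; positivity
        · have := A.b_nonneg; have := abs_nonneg d.im; simp only [neg_nonpos]; positivity

open Nat in
lemma norm_W_neg_rayV_le (hE : 0 ≤ E) (hx : x ∈ F.V E) (n : ℕ) {t : ℝ} (ht₀ : 0 ≤ t)
    (ht₁ : t ≤ 1) :
    ‖F.W (-(p + t * d)) (A.rayV p d x n t)‖ ≤
      Real.exp ((|p.im| + |d.im|) * E) * ‖x‖ * ((‖d‖ * A.C * √(E + A.b + 1)) ^ n / √(n ! : ℝ))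
        * (t ^ n * Real.exp (t * |d.im| * (E + n * A.b))) := by
  have hb := A.b_nonneg
  have hC := A.C_nonneg
  induction n generalizing t with
  | zero =>
    have him : |(-(p + t * d)).im| ≤ |p.im| + |d.im| := by
      have : (-(p + t * d)).im = -(p.im + t * d.im) := by simp
      rw [this, abs_neg]
      refine (abs_add_le _ _).trans (add_le_add_right ?_ _)
      rw [abs_mul, abs_of_nonneg ht₀]
      exact mul_le_of_le_one_left (abs_nonneg _) ht₁
    calc ‖F.W (-(p + t * d)) x‖ ≤ Real.exp (|(-(p + t * d)).im| * E) * ‖x‖ :=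
          F.W_norm _ E hE x hx
      _ ≤ Real.exp ((|p.im| + |d.im|) * E) * ‖x‖ := by gcongr
      _ ≤ _ := by
          simp only [pow_zero, Nat.factorial_zero, Nat.cast_one, Real.sqrt_one, div_one,
            mul_one, one_mul, CharP.cast_eq_zero, zero_mul, add_zero]
          exact le_mul_of_one_le_right (by positivity) (Real.one_le_exp (by positivity))
  | succ n ih =>
    refine (A.norm_W_neg_rayV_succ_le p d hE hx n (by positivity) ht₀
      fun u hu => ih hu.1 (hu.2.trans ht₁)).trans ?_
    have hstep := mul_sqrt_mul_pow_div_sqrt_factorial_le (e := E + n * A.b + 1)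
      (mul_nonneg (norm_nonneg d) hC) (by positivity : 0 ≤ E + A.b + 1) (by nlinarith)
    calc _ = Real.exp ((|p.im| + |d.im|) * E) * ‖x‖ *
          (‖d‖ * A.C * √(E + n * A.b + 1) *
            ((‖d‖ * A.C * √(E + A.b + 1)) ^ n / √(n ! : ℝ)) / (n + 1)) *
          (t ^ (n + 1) * Real.exp (t * |d.im| * (E + (n + 1) * A.b))) := by ring
      _ ≤ _ := by
          push_cast
          gcongr

end Ray

lemma Vn_eq_rayV (z z' : ℂ) (x : 𝓗) (n : ℕ) : A.Vn n z z' x = A.rayV z' (z - z') x n 1 := by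
  rw [A.rayV_eq_Vn]
  push_cast
  ring_nf

open Nat in
lemma exists_norm_Vn_le {E : ℝ} (hE : 0 ≤ E) {x : 𝓗} (hx : x ∈ F.V E) (z z' : ℂ) :
    ∃ K R : ℝ, ∀ n, ‖A.Vn n z z' x‖ ≤ K * (R ^ n / √(n ! : ℝ)) := by
  set β := |(z - z').im|
  set γ := |z.im| + β
  refine ⟨Real.exp ((|z'.im| + β) * E) * ‖x‖ * Real.exp (γ * E),
    Real.exp (γ * A.b) * (‖z - z'‖ * A.C * √(E + A.b + 1)), fun n => ?_⟩
  have hEn : 0 ≤ E + n * A.b := by have := A.b_nonneg; positivity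
  have hY := A.rayV_mem z' (z - z') hE hx n 1
  have hbound := A.norm_W_neg_rayV_le z' (z - z') hE hx n zero_le_one le_rfl
  rw [show z' + ((1 : ℝ) : ℂ) * (z - z') = z by push_cast; ring] at hbound
  rw [A.Vn_eq_rayV, ← F.W_neg_cancel hY z]
  calc ‖F.W z (F.W (-z) (A.rayV z' (z - z') x n 1))‖
      ≤ Real.exp (|z.im| * (E + n * A.b)) * ‖F.W (-z) (A.rayV z' (z - z') x n 1)‖ :=
        F.W_norm _ _ hEn _ (F.W_mem _ _ _ hY)
    _ ≤ Real.exp (|z.im| * (E + n * A.b)) * (Real.exp ((|z'.im| + β) * E) * ‖x‖ *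
          ((‖z - z'‖ * A.C * √(E + A.b + 1)) ^ n / √(n ! : ℝ)) *
          (1 ^ n * Real.exp (1 * β * (E + n * A.b)))) := by gcongr
    _ = _ := by
        have hexp : Real.exp (|z.im| * (E + n * A.b)) * Real.exp (1 * β * (E + n * A.b)) =
            Real.exp (γ * E) * Real.exp (γ * A.b) ^ n := by
          rw [← Real.exp_add, ← Real.exp_nat_mul, ← Real.exp_add]
          congr 1; simp only [γ]; ring
        rw [mul_pow (Real.exp (γ * A.b)), one_pow, one_mul]
        linear_combination (Real.exp ((|z'.im| + β) * E) * ‖x‖ *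
          ((‖z - z'‖ * A.C * √(E + A.b + 1)) ^ n / √(n ! : ℝ))) * hexp

lemma summable_Vn {E : ℝ} (hE : 0 ≤ E) {x : 𝓗} (hx : x ∈ F.V E) (z z' : ℂ) :
    Summable fun n => A.Vn n z z' x := by
  obtain ⟨K, R, hKR⟩ := A.exists_norm_Vn_le hE hx z z'
  exact Summable.of_norm_bounded ((summable_pow_div_sqrt_factorial R).mul_left K) hKR

/-- The ray from `conj z` to `conj z'` is the conjugate of the ray from `z'` to `z`, run
backwards; along it `A*` is paired with `A` by `inner_flip_Az_conj`. -/
lemma inner_rayVDeriv_flip_add {E₁ E₂ : ℝ} (hE₁ : 0 ≤ E₁) (hE₂ : 0 ≤ E₂) {u v : 𝓗}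
    (hu : u ∈ F.V E₁) (hv : v ∈ F.V E₂) (z z' : ℂ) (k m : ℕ) (t : ℝ) :
    ⟪(-1 : ℝ) • A.flip.rayVDeriv (conj z) (conj z' - conj z) u (k + 1) (1 - t),
        A.rayV z' (z - z') v m t⟫_ℂ +
      ⟪A.flip.rayV (conj z) (conj z' - conj z) u k (1 - t),
        A.rayVDeriv z' (z - z') v (m + 1) t⟫_ℂ = 0 := by
  have hpath : conj z + ((1 - t : ℝ) : ℂ) * (conj z' - conj z) = conj (z' + t * (z - z')) := by
    simp only [map_add, map_mul, map_sub, Complex.conj_ofReal]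
    push_cast
    ring
  simp only [rayVDeriv]
  rw [hpath, neg_one_smul, inner_neg_left, inner_smul_left, inner_smul_right,
    A.inner_flip_Az_conj (A.flip.rayV_mem_Dfin _ _ hE₁ hu k _) (A.rayV_mem_Dfin _ _ hE₂ hv m t)]
  simp only [map_mul, map_neg, map_sub, Complex.conj_I, Complex.conj_conj]
  ring

open Finset in
lemma inner_VnStar_conj {E₁ E₂ : ℝ} (hE₁ : 0 ≤ E₁) (hE₂ : 0 ≤ E₂) {u v : 𝓗}
    (hu : u ∈ F.V E₁) (hv : v ∈ F.V E₂) (z z' : ℂ) (n : ℕ) :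
    ⟪A.VnStar n (conj z') (conj z) u, v⟫_ℂ = ⟪u, A.Vn n z z' v⟫_ℂ := by
  set f : ℕ → ℝ → 𝓗 := fun k s => A.flip.rayV (conj z) (conj z' - conj z) u k (1 - s)
  set g : ℕ → ℝ → 𝓗 := A.rayV z' (z - z') v
  have hderiv : ∀ t, HasDerivAt (fun s => ∑ q ∈ antidiagonal n, ⟪f q.1 s, g q.2 s⟫_ℂ)
      0 t := fun t =>
    hasDerivAt_sum_antidiagonal_inner
      (f' := fun k s => (-1 : ℝ) • A.flip.rayVDeriv (conj z) (conj z' - conj z) u k (1 - s))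
      (fun k => (A.flip.hasDerivAt_rayV _ _ hE₁ hu k (1 - t)).scomp t
        ((hasDerivAt_id t).const_sub 1))
      (fun m => A.hasDerivAt_rayV _ _ hE₂ hv m t) (smul_zero _) rfl
      (A.inner_rayVDeriv_flip_add hE₁ hE₂ hu hv z z' · · t) n
  have hconst := is_const_of_deriv_eq_zero (fun t => (hderiv t).differentiableAt)
    (fun t => (hderiv t).deriv) 0 1
  rw [← flip_Vn, Vn_eq_rayV, Vn_eq_rayV]
  cases n with
  | zero => simp [rayV_zero]
  | succ n =>
    rw [Nat.sum_antidiagonal_succ', Nat.sum_antidiagonal_succ] at hconst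
    simpa [f, g, rayV_zero, rayV_succ_zero] using hconst

lemma inner_Ustar_conj {u v : 𝓗} (hu : u ∈ F.Dfin) (hv : v ∈ F.Dfin) (z z' : ℂ) :
    ⟪A.Ustar (conj z') (conj z) u, v⟫_ℂ = ⟪u, A.U z z' v⟫_ℂ := by
  obtain ⟨E₁, hE₁, hu⟩ := F.exists_mem_V_of_mem_Dfin hu
  obtain ⟨E₂, hE₂, hv⟩ := F.exists_mem_V_of_mem_Dfin hv
  have h₁ := (innerSLFlip ℂ v).map_tsum (A.flip.summable_Vn hE₁ hu (conj z') (conj z))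
  have h₂ := (innerSL ℂ u).map_tsum (A.summable_Vn hE₂ hv z z')
  simp only [innerSLFlip_apply_apply, innerSL_apply_apply] at h₁ h₂
  rw [Ustar, U, ← flip_Vn, h₁, h₂]
  exact tsum_congr (A.inner_VnStar_conj hE₁ hE₂ hu hv z z')

end C0

theorem statement1_general {𝓗 : Type*} [NormedAddCommGroup 𝓗] [InnerProductSpace ℂ 𝓗]
    [CompleteSpace 𝓗] (F : FreeData 𝓗) (A : C0 F) (z z' : ℂ) :
    (∀ x y₁ y₂ : 𝓗, (x, y₁) ∈ graphClos F.Dfin (A.U z z') →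
      (x, y₂) ∈ graphClos F.Dfin (A.U z z') → y₁ = y₂) ∧
    (∀ y w : 𝓗,
      (y, w) ∈ graphClos F.Dfin (A.Ustar (starRingEnd ℂ z') (starRingEnd ℂ z)) →
      ∀ x ∈ F.Dfin, (inner ℂ y (A.U z z' x) : ℂ) = inner ℂ w x) := by
  have hpair : ∀ u ∈ F.Dfin, ∀ v ∈ F.Dfin,
      ⟪A.Ustar (conj z') (conj z) u, v⟫_ℂ = ⟪u, A.U z z' v⟫_ℂ :=
    fun u hu v hv => A.inner_Ustar_conj hu hv z z'
  exact ⟨fun x y₁ y₂ => eq_of_mem_graphClos_of_inner hpair F.dense_Dfin,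
    fun y w hyw x hx => inner_eq_of_mem_graphClos_of_inner hpair hyw hx⟩

/-- Let `A` be of `C₀`-class and `z, z' ∈ ℂ` with `Im z' ≤ Im z`.  The
operator `U(A;z,z')` defined on `D_fin` is closable (the closure of its graph is the graph
of a map), and its adjoint extends the closure of `U(A*; z'*, z*)`: whenever `(y, w)`
belongs to the closure of the graph of `U(A*; conj z', conj z) ↾ D_fin`, one has
`⟪y, U(A;z,z') x⟫ = ⟪w, x⟫` for all `x ∈ D_fin`, i.e. `y ∈ D(U(A;z,z')*)` and
`U(A;z,z')* y = w`. -/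
theorem statement1 {𝓗 : Type*} [NormedAddCommGroup 𝓗] [InnerProductSpace ℂ 𝓗]
    [CompleteSpace 𝓗] (F : FreeData 𝓗) (A : C0 F) (z z' : ℂ) (him : z'.im ≤ z.im) :
    (∀ x y₁ y₂ : 𝓗, (x, y₁) ∈ graphClos F.Dfin (A.U z z') →
      (x, y₂) ∈ graphClos F.Dfin (A.U z z') → y₁ = y₂) ∧
    (∀ y w : 𝓗,
      (y, w) ∈ graphClos F.Dfin (A.Ustar (starRingEnd ℂ z') (starRingEnd ℂ z)) →
      ∀ x ∈ F.Dfin, (inner ℂ y (A.U z z' x) : ℂ) = inner ℂ w x) :=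
  statement1_general F A z z'
end
end

section
/- Let A₁,…,Aₙ be of C₀-class. Then for every Ψ ∈ D_fin, the map ℂⁿ ∋ (z₁,…,zₙ) ↦ A₁(z₁)…Aₙ(zₙ)Ψ ∈ ℋ is strongly analytic on all of ℂⁿ (i.e. it admits an absolutely convergent power series expansion in z₁,…,zₙ near each point). -/
open MeasureTheory Complex Filter Set

noncomputable section

/-- The operator product `A₁(z₁) A₂(z₂) ⋯ Aₙ(zₙ) Ψ`. -/
def opProdMulti {𝓗 : Type*} [NormedAddCommGroup 𝓗] [InnerProductSpace ℂ 𝓗]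
    [CompleteSpace 𝓗] {F : FreeData 𝓗} {n : ℕ}
    (As : Fin n → C0 F) (z : Fin n → ℂ) (Ψ : 𝓗) : 𝓗 :=
  (List.ofFn fun i => ((As i).Az (z i) : 𝓗 →ₗ[ℂ] 𝓗)).foldr (fun g y => g y) Ψ

/-!
On a spectral subspace `V E` the generator `iH₀` is bounded, so there `e^{izH₀}` is the operator
exponential `exp (z • iH₀)`: both solve `u' = iH₀ u` with the same initial value. Since `A` maps
`V E` boundedly into `V (E + b)`, the conjugate `A(z) = e^{izH₀} A e^{-izH₀}` restricts to an
entire family of bounded operators `V E → V (E + b)`. Composing `n` such families, starting from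
`Ψ ∈ V E`, exhibits `A₁(z₁)⋯Aₙ(zₙ)Ψ` as an analytic function of `z` with values in the Banach
space `V (E + b₁ + ⋯ + bₙ)`.
-/

theorem Submodule.hasDerivAt_of_hasDerivAt_coe {𝕜 E : Type*} [NontriviallyNormedField 𝕜]
    [NormedAddCommGroup E] [NormedSpace 𝕜 E] {p : Submodule 𝕜 E} {f : 𝕜 → p} {f' : p} {x : 𝕜}
    (h : HasDerivAt (fun y => (f y : E)) f' x) : HasDerivAt f f' x := by
  rw [hasDerivAt_iff_isLittleO, ← Asymptotics.isLittleO_norm_left] at h ⊢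
  exact h.congr_left fun y => by simp [Submodule.coe_norm]

theorem analyticAt_exp_smul_const {𝔸 : Type*} [NormedRing 𝔸] [NormedAlgebra ℂ 𝔸]
    [CompleteSpace 𝔸] (a : 𝔸) (z : ℂ) :
    AnalyticAt ℂ (fun w : ℂ => NormedSpace.exp (w • a)) z :=
  (NormedSpace.exp_analytic _).comp (analyticAt_id.smul analyticAt_const)

theorem ContinuousLinearMap.eq_exp_smul_apply_of_hasDerivAt {𝕂 X : Type*} [RCLike 𝕂]
    [NormedAddCommGroup X] [NormedSpace 𝕂 X] [CompleteSpace X] {a : X →L[𝕂] X} {u : 𝕂 → X}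
    (hu : ∀ t, HasDerivAt u (a (u t)) t) (t : 𝕂) :
    u t = NormedSpace.exp (t • a) (u 0) := by
  have hderiv : ∀ s, HasDerivAt (fun s => NormedSpace.exp (s • -a) (u s)) 0 s := fun s =>
    ((hasDerivAt_exp_smul_const (-a) s).clm_apply (hu s)).congr_deriv (by simp)
  have hconst : NormedSpace.exp (t • -a) (u t) = u 0 := by
    simpa using is_const_of_deriv_eq_zero (fun s => (hderiv s).differentiableAt)
      (fun s => (hderiv s).deriv) t 0
  let : NormedAlgebra ℚ (X →L[𝕂] X) := .restrictScalars ℚ 𝕂 _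
  rw [← hconst, ← mul_apply_eq_comp, smul_neg, ← NormedSpace.exp_add_of_commute
    (Commute.refl (t • a)).neg_right, add_neg_cancel, NormedSpace.exp_zero, one_apply_eq_self]

section

variable {𝓗 : Type*} [NormedAddCommGroup 𝓗] [InnerProductSpace ℂ 𝓗] [CompleteSpace 𝓗]

-- Without this, instance search fails to find `IsTopologicalRing` for operators on a submodule.
local instance (p : Submodule ℂ 𝓗) : NormedRing (p →L[ℂ] p) := ContinuousLinearMap.toNormedRing

namespace FreeData

variable (F : FreeData 𝓗) {E : ℝ}

instance completeSpace_V (E : ℝ) : CompleteSpace (F.V E) := (F.V_closed E).completeSpace_coe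

def generator (hE : 0 ≤ E) : F.V E →L[ℂ] F.V E :=
  LinearMap.mkContinuous
    ((I • F.H0).restrict fun x hx => (F.V E).smul_mem I (F.H0_mem E x hx)) E
    fun x => by simpa [norm_smul] using F.H0_norm E hE x x.2

theorem W_eq_exp_generator (hE : 0 ≤ E) (z : ℂ) (x : F.V E) :
    F.W z x = (NormedSpace.exp (z • F.generator hE) x : 𝓗) := by
  let u : ℂ → F.V E := fun w => ⟨F.W w x, F.W_mem w E x x.2⟩
  have hu : ∀ w, HasDerivAt u (F.generator hE (u w)) w := fun w =>
    Submodule.hasDerivAt_of_hasDerivAt_coe (F.W_deriv E x x.2 w)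
  have hu0 : u 0 = x := Subtype.ext (F.W_zero x)
  simpa [u, hu0] using
    congrArg Subtype.val (ContinuousLinearMap.eq_exp_smul_apply_of_hasDerivAt hu z)

end FreeData

namespace C0

variable {F : FreeData 𝓗} (A : C0 F) {E : ℝ} (hE : 0 ≤ E)

def opOn : F.V E →L[ℂ] F.V (E + A.b) :=
  LinearMap.mkContinuous (A.op.restrict fun x hx => A.map_V E hE x hx) (A.C * √(E + 1))
    fun x => by simpa using A.norm_bound E hE x x.2

def AzOn (ζ : ℂ) : F.V E →L[ℂ] F.V (E + A.b) :=
  NormedSpace.exp (ζ • F.generator (add_nonneg hE A.b_nonneg)) ∘L A.opOn hE ∘L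
    NormedSpace.exp ((-ζ) • F.generator hE)

theorem coe_AzOn_apply (ζ : ℂ) (x : F.V E) : (A.AzOn hE ζ x : 𝓗) = A.Az ζ x := by
  rw [AzOn, ContinuousLinearMap.comp_apply, ← F.W_eq_exp_generator,
    ContinuousLinearMap.comp_apply, Az, LinearMap.comp_apply, LinearMap.comp_apply,
    F.W_eq_exp_generator hE]
  rfl

theorem analyticAt_AzOn (ζ : ℂ) : AnalyticAt ℂ (A.AzOn hE) ζ := by
  have hconj := (analyticAt_exp_smul_const (F.generator hE) (-ζ)).comp analyticAt_id.neg
  have hright := ((ContinuousLinearMap.compL ℂ (F.V E) (F.V E) (F.V (E + A.b))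
    (A.opOn hE)).analyticAt _).comp hconj
  exact ((ContinuousLinearMap.compL ℂ (F.V E) (F.V (E + A.b))
    (F.V (E + A.b))).analyticAt_bilinear _).comp₂ (analyticAt_exp_smul_const _ ζ) hright

end C0

variable {F : FreeData 𝓗}

theorem opProdMulti_succ {n : ℕ} (As : Fin (n + 1) → C0 F) (z : Fin (n + 1) → ℂ) (Ψ : 𝓗) :
    opProdMulti As z Ψ = (As 0).Az (z 0) (opProdMulti (Fin.tail As) (Fin.tail z) Ψ) := by
  rw [opProdMulti, List.ofFn_succ]
  rfl

theorem exists_analytic_lift_opProdMulti {n : ℕ} (As : Fin n → C0 F) {E : ℝ} (hE : 0 ≤ E)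
    {Ψ : 𝓗} (hΨ : Ψ ∈ F.V E) :
    ∃ E' ≥ 0, ∃ g : (Fin n → ℂ) → F.V E',
      AnalyticOnNhd ℂ g univ ∧ ∀ z, (g z : 𝓗) = opProdMulti As z Ψ := by
  induction n with
  | zero => exact ⟨E, hE, fun _ => ⟨Ψ, hΨ⟩, fun _ _ => analyticAt_const, fun _ => rfl⟩
  | succ n ih =>
    obtain ⟨E', hE', g, hg, hgΨ⟩ := ih (Fin.tail As)
    refine ⟨E' + (As 0).b, add_nonneg hE' (As 0).b_nonneg,
      fun z => (As 0).AzOn hE' (z 0) (g (Fin.tail z)), fun z _ => ?_, fun z => ?_⟩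
    · have hhead : AnalyticAt ℂ (fun z : Fin (n + 1) → ℂ => z 0) z :=
        (ContinuousLinearMap.proj (R := ℂ) (φ := fun _ : Fin (n + 1) => ℂ) 0).analyticAt z
      have htail : AnalyticAt ℂ (fun z : Fin (n + 1) → ℂ => Fin.tail z) z :=
        .pi fun i =>
          (ContinuousLinearMap.proj (R := ℂ) (φ := fun _ : Fin (n + 1) => ℂ) i.succ).analyticAt z
      exact ((ContinuousLinearMap.id ℂ _).analyticAt_bilinear _).comp₂
        (((As 0).analyticAt_AzOn hE' _).comp hhead) ((hg _ trivial).comp htail)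
    · rw [opProdMulti_succ, ← hgΨ, C0.coe_AzOn_apply]

end

/-- Let `A₁, …, Aₙ` be of `C₀`-class.  Then for every `Ψ ∈ D_fin` the map
`ℂⁿ ∋ (z₁,…,zₙ) ↦ A₁(z₁)⋯Aₙ(zₙ)Ψ ∈ 𝓗` is strongly analytic on all of `ℂⁿ` (it admits an
absolutely convergent power series expansion near each point). -/
theorem statement2 {𝓗 : Type*} [NormedAddCommGroup 𝓗] [InnerProductSpace ℂ 𝓗]
    [CompleteSpace 𝓗] (F : FreeData 𝓗) (n : ℕ) (As : Fin n → C0 F)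
    (Ψ : 𝓗) (hΨ : Ψ ∈ F.Dfin) :
    AnalyticOnNhd ℂ (fun z : Fin n → ℂ => opProdMulti As z Ψ) Set.univ := by
  simp only [FreeData.Dfin, mem_iUnion, SetLike.mem_coe] at hΨ
  obtain ⟨E, hE, hΨE⟩ := hΨ
  obtain ⟨E', -, g, hg, hgΨ⟩ := exists_analytic_lift_opProdMulti As hE hΨE
  intro z _
  exact (((F.V E').subtypeL.analyticAt _).comp (hg z trivial)).congr
    (Eventually.of_forall hgΨ)
end
end

section
/- Let H be a self-adjoint operator in ℋ, bounded below, with ground energy E₀ := inf σ(H), and let P₀ := E_H({E₀}) be the orthogonal projection onto ker(H − E₀). Then for every ε > 0, every Borel function f : ℝ → ℂ, and every Ψ ∈ D(f(H)), one has lim_{T→∞} f(H) e^{iT(±1−iε)E₀} e^{−iT(±1−iε)H} Ψ = f(E₀) P₀ Ψ. -/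
/-!
In the spectral representation the vector `f(H) e^{iT(±1-iε)E₀} e^{-iT(±1-iε)H} Ψ` is
`f(h) · e^{iT(±1-iε)(E₀-h)} · UΨ`. Since `h ≥ E₀` almost everywhere, the middle factor has modulus
`e^{-Tε(h-E₀)} ≤ 1` and tends pointwise to the indicator of `{h = E₀}` as `T → ∞`. Dominated
convergence in `L²`, with dominating function `f(h) · UΨ ∈ L²`, gives the limit `f(E₀) P₀ Ψ`.
-/

open MeasureTheory Complex Filter

noncomputable section

open scoped ENNReal Topology

theorem ae_sInf_le_of_ae_le {X : Type*} [MeasurableSpace X] {μ : Measure X} {h : X → ℝ} {c : ℝ}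
    (hbd : ∀ᵐ a ∂μ, c ≤ h a) :
    ∀ᵐ a ∂μ, sInf {r : ℝ | 0 < μ {a | h a < r}} ≤ h a := by
  set S := {r : ℝ | 0 < μ {a | h a < r}}
  have hS : BddBelow S := by
    refine ⟨c, fun r hr => not_lt.1 fun hrc => hr.ne' (measure_mono_null ?_ hbd)⟩
    intro a ha hca
    exact lt_irrefl _ ((hca.trans_lt ha).trans hrc)
  have hnull : ∀ q : ℚ, ∀ᵐ a ∂μ, (q : ℝ) < sInf S → (q : ℝ) ≤ h a := by
    intro q
    by_cases hq : (q : ℝ) < sInf S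
    · have : μ {a | h a < q} = 0 := by
        by_contra hne
        exact (csInf_le hS (pos_iff_ne_zero.2 hne)).not_gt hq
      refine ae_iff.2 (measure_mono_null (fun a ha => ?_) this)
      exact lt_of_not_ge (Classical.not_imp.1 ha).2
    · exact Eventually.of_forall fun a hq' => (hq hq').elim
  filter_upwards [ae_all_iff.2 hnull] with a ha
  exact le_of_forall_rat_lt_imp_le ha

/-- The spectral multiplier `e^{iT(s-iε)(E₀-x)}` of `e^{iT(s-iε)E₀} e^{-iT(s-iε)H}`. -/
def dampedPhase (s ε E₀ T x : ℝ) : ℂ :=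
  exp (I * T * (s - I * ε) * (E₀ - x))

theorem norm_dampedPhase (s ε E₀ T x : ℝ) :
    ‖dampedPhase s ε E₀ T x‖ = Real.exp (T * ε * (E₀ - x)) := by
  rw [dampedPhase, norm_exp]
  congr 1
  simp

theorem measurable_dampedPhase (s ε E₀ T : ℝ) : Measurable (dampedPhase s ε E₀ T) := by
  unfold dampedPhase
  fun_prop

theorem dampedPhase_self (s ε E₀ T : ℝ) : dampedPhase s ε E₀ T E₀ = 1 := by
  simp [dampedPhase]

theorem norm_dampedPhase_le_one {s ε E₀ T x : ℝ} (hε : 0 ≤ ε) (hT : 0 ≤ T) (hx : E₀ ≤ x) :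
    ‖dampedPhase s ε E₀ T x‖ ≤ 1 := by
  rw [norm_dampedPhase, Real.exp_le_one_iff]
  exact mul_nonpos_of_nonneg_of_nonpos (mul_nonneg hT hε) (sub_nonpos.2 hx)

theorem tendsto_dampedPhase_atTop {s ε E₀ x : ℝ} (hε : 0 < ε) (hx : E₀ ≤ x) :
    Tendsto (fun T => dampedPhase s ε E₀ T x) atTop (𝓝 (if x = E₀ then 1 else 0)) := by
  split_ifs with hxE
  · simp [hxE, dampedPhase_self]
  have hneg : ε * (E₀ - x) < 0 := mul_neg_of_pos_of_neg hε (sub_neg.2 (hx.lt_of_ne' hxE))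
  rw [tendsto_zero_iff_norm_tendsto_zero]
  simp only [norm_dampedPhase, mul_assoc]
  exact Real.tendsto_exp_atBot.comp (tendsto_id.atTop_mul_const_of_neg hneg)

theorem tendsto_eLpNorm_sub_of_dominated {α E F ι : Type*} {m : MeasurableSpace α}
    {μ : Measure α} [NormedAddCommGroup E] [NormedAddCommGroup F] {p : ℝ≥0∞}
    {l : Filter ι} [l.IsCountablyGenerated] (hp0 : p ≠ 0) (hp : p ≠ ∞)
    {u : ι → α → E} {v : α → E} {G : α → F}
    (hu : ∀ᶠ i in l, AEStronglyMeasurable (u i) μ) (hG : MemLp G p μ) (hv : MemLp v p μ)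
    (hbound : ∀ᶠ i in l, ∀ᵐ a ∂μ, ‖u i a‖ ≤ ‖G a‖)
    (hlim : ∀ᵐ a ∂μ, Tendsto (u · a) l (𝓝 (v a))) :
    Tendsto (fun i => eLpNorm (u i - v) p μ) l (𝓝 0) := by
  have hp' : 0 < p.toReal := ENNReal.toReal_pos hp0 hp
  set H : α → ℝ := fun a => ‖G a‖ + ‖v a‖
  have hH : MemLp H p μ := hG.norm.add hv.norm
  suffices Tendsto (fun i => ∫⁻ a, ‖u i a - v a‖ₑ ^ p.toReal ∂μ) l (𝓝 0) by
    simp only [eLpNorm_eq_lintegral_rpow_enorm_toReal hp0 hp, Pi.sub_apply, one_div]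
    rw [← ENNReal.zero_rpow_of_pos (inv_pos.2 hp')]
    exact (ENNReal.continuous_rpow_const.tendsto 0).comp this
  have hbound' : ∀ᶠ i in l, ∀ᵐ a ∂μ, ‖u i a - v a‖ₑ ^ p.toReal ≤ ‖H a‖ₑ ^ p.toReal := by
    filter_upwards [hbound] with i hi
    filter_upwards [hi] with a ha
    gcongr
    rw [enorm_le_iff_norm_le, Real.norm_of_nonneg (by positivity)]
    exact (norm_sub_le _ _).trans (add_le_add_left ha _)
  have hlim' : ∀ᵐ a ∂μ, Tendsto (fun i => ‖u i a - v a‖ₑ ^ p.toReal) l (𝓝 0) := by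
    filter_upwards [hlim] with a ha
    simpa [Function.comp_def, hp'] using
      (ENNReal.continuous_rpow_const (y := p.toReal).tendsto _).comp (ha.sub_const (v a)).enorm
  simpa using tendsto_lintegral_filter_of_dominated_convergence' (f := fun _ => 0) _
    (hu.mono fun i hi => (hi.sub hv.1).enorm.pow_const _) hbound'
    (lintegral_rpow_enorm_lt_top_of_eLpNorm_lt_top hp0 hp hH.eLpNorm_lt_top).ne hlim'

theorem LinearIsometryEquiv.tendsto_of_tendsto_eLpNorm_sub {𝕜 𝓗 α E ι : Type*} [NormedField 𝕜]
    [NormedAddCommGroup 𝓗] [NormedSpace 𝕜 𝓗] [NormedAddCommGroup E] [NormedSpace 𝕜 E]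
    {m : MeasurableSpace α} {μ : Measure α} {p : ℝ≥0∞} [Fact (1 ≤ p)] {l : Filter ι}
    (U : 𝓗 ≃ₗᵢ[𝕜] Lp E p μ) {g : ι → 𝓗} {y : 𝓗} {u : ι → α → E} {v : α → E}
    (hg : ∀ᶠ i in l, U (g i) =ᵐ[μ] u i) (hy : U y =ᵐ[μ] v)
    (h : Tendsto (fun i => eLpNorm (u i - v) p μ) l (𝓝 0)) :
    Tendsto g l (𝓝 y) := by
  have hU : Tendsto (fun i => U (g i)) l (𝓝 (U y)) := by
    rw [Lp.tendsto_Lp_iff_tendsto_eLpNorm']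
    refine h.congr' ?_
    filter_upwards [hg] with i hi
    exact eLpNorm_congr_ae (hi.sub hy).symm
  simpa [Function.comp_def] using (U.symm.continuous.tendsto _).comp hU

theorem statement16_general {𝓗 : Type*} [NormedAddCommGroup 𝓗] [InnerProductSpace ℂ 𝓗]
    {X : Type*} [MeasurableSpace X] (μ : Measure X)
    (h : X → ℝ) (hh : Measurable h)
    (U : 𝓗 ≃ₗᵢ[ℂ] Lp ℂ 2 μ)
    (c : ℝ) (hbd : ∀ᵐ a ∂μ, c ≤ h a)
    (E₀ : ℝ) (hE₀ : E₀ = sInf {r : ℝ | 0 < μ {a | h a < r}})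
    (ε : ℝ) (hε : 0 < ε) (sgn : ℝ)
    (f : ℝ → ℂ)
    (Ψ : 𝓗) (hΨ : MemLp (fun a => f (h a) * (U Ψ : X → ℂ) a) 2 μ) :
    (∃ g : ℝ → 𝓗, ∀ T : ℝ, 0 ≤ T →
      (U (g T) : X → ℂ) =ᵐ[μ] fun a =>
        f (h a) * Complex.exp (Complex.I * (T : ℂ) * ((sgn : ℂ) - Complex.I * (ε : ℂ)) *
          ((E₀ : ℂ) - (h a : ℂ))) * (U Ψ : X → ℂ) a) ∧
    (∃ y₀ : 𝓗, (U y₀ : X → ℂ) =ᵐ[μ] fun a =>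
      f E₀ * ({a : X | h a = E₀}.indicator (fun a => (U Ψ : X → ℂ) a) a)) ∧
    (∀ (g : ℝ → 𝓗) (y₀ : 𝓗),
      (∀ T : ℝ, 0 ≤ T →
        (U (g T) : X → ℂ) =ᵐ[μ] fun a =>
          f (h a) * Complex.exp (Complex.I * (T : ℂ) * ((sgn : ℂ) - Complex.I * (ε : ℂ)) *
            ((E₀ : ℂ) - (h a : ℂ))) * (U Ψ : X → ℂ) a) →
      ((U y₀ : X → ℂ) =ᵐ[μ] fun a =>
        f E₀ * ({a : X | h a = E₀}.indicator (fun a => (U Ψ : X → ℂ) a) a)) →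
      Tendsto g atTop (nhds y₀)) := by
  set ψ : X → ℂ := ⇑(U Ψ)
  set u : ℝ → X → ℂ := fun T a => f (h a) * dampedPhase sgn ε E₀ T (h a) * ψ a
  set v : X → ℂ := fun a => f E₀ * {a | h a = E₀}.indicator ψ a
  have h_ge : ∀ᵐ a ∂μ, E₀ ≤ h a := hE₀ ▸ ae_sInf_le_of_ae_le hbd
  have hu_meas : ∀ T, AEStronglyMeasurable (u T) μ := fun T =>
    (((measurable_dampedPhase sgn ε E₀ T).comp hh).aestronglyMeasurable.mul hΨ.1).congr
      (.of_forall fun a => by simp only [Pi.mul_apply, Function.comp_apply, u]; ring)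
  have hu_le : ∀ T, 0 ≤ T → ∀ᵐ a ∂μ, ‖u T a‖ ≤ ‖f (h a) * ψ a‖ := fun T hT => by
    filter_upwards [h_ge] with a ha
    have hφ := norm_dampedPhase_le_one (s := sgn) hε.le hT ha
    simp only [u, norm_mul]
    calc _ ≤ ‖f (h a)‖ * 1 * ‖ψ a‖ := by gcongr
      _ = _ := by ring
  have hu_mem : ∀ T, 0 ≤ T → MemLp (u T) 2 μ := fun T hT => hΨ.of_le (hu_meas T) (hu_le T hT)
  have hv_mem : MemLp v 2 μ :=
    ((Lp.memLp (U Ψ)).indicator (hh (measurableSet_singleton E₀))).const_mul (f E₀)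
  have hu_lim : ∀ᵐ a ∂μ, Tendsto (u · a) atTop (𝓝 (v a)) := by
    filter_upwards [h_ge] with a ha
    convert ((tendsto_dampedPhase_atTop (s := sgn) hε ha).const_mul (f (h a))).mul_const (ψ a)
      using 2
    by_cases hx : h a = E₀ <;> simp [v, hx]
  refine ⟨⟨fun T => U.symm (if hT : 0 ≤ T then (hu_mem T hT).toLp (u T) else 0), fun T hT => ?_⟩,
    ⟨U.symm (hv_mem.toLp v), by simpa using hv_mem.coeFn_toLp⟩, fun g y₀ hg hy₀ => ?_⟩
  · simp only [dif_pos hT, U.apply_symm_apply]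
    exact (hu_mem T hT).coeFn_toLp
  exact U.tendsto_of_tendsto_eLpNorm_sub ((eventually_ge_atTop 0).mono hg) hy₀
    (tendsto_eLpNorm_sub_of_dominated two_ne_zero ENNReal.ofNat_ne_top (.of_forall hu_meas) hΨ
      hv_mem ((eventually_ge_atTop 0).mono hu_le) hu_lim)

/-- Let `H` be a self-adjoint operator in a complex Hilbert space `𝓗`,
bounded below, with ground energy `E₀ = inf σ(H)` and `P₀ = E_H({E₀})` the orthogonal
projection onto `ker (H - E₀)`.  Then for every `ε > 0`, every Borel `f : ℝ → ℂ` and every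
`Ψ ∈ D(f(H))`,
`lim_{T→∞} f(H) e^{iT(±1-iε)E₀} e^{-iT(±1-iε)H} Ψ = f(E₀) P₀ Ψ`.

Here, by the spectral theorem, `H` is presented in its spectral representation: a unitary
`U : 𝓗 ≃ Lp²(μ)` carries `H` into multiplication by the measurable function `h`
(bounded below by `c`), so that `E₀ = inf σ(H)` is the essential infimum of `h`, the
functional calculus `φ(H)` is multiplication by `φ ∘ h`, and `P₀` is multiplication by the
indicator of `{h = E₀}`.  The vectors `f(H) e^{iT(±1-iε)E₀} e^{-iT(±1-iε)H} Ψ` (`T ≥ 0`)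
and `f(E₀) P₀ Ψ` are described through `U` by the corresponding multipliers, and the limit
holds in the norm of `𝓗`. -/
theorem statement16 {𝓗 : Type*} [NormedAddCommGroup 𝓗] [InnerProductSpace ℂ 𝓗]
    [CompleteSpace 𝓗] {X : Type*} [MeasurableSpace X] (μ : Measure X)
    (h : X → ℝ) (hh : Measurable h)
    (U : 𝓗 ≃ₗᵢ[ℂ] Lp ℂ 2 μ)
    (c : ℝ) (hbd : ∀ᵐ a ∂μ, c ≤ h a)
    (E₀ : ℝ) (hE₀ : E₀ = sInf {r : ℝ | 0 < μ {a | h a < r}})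
    (ε : ℝ) (hε : 0 < ε) (sgn : ℝ) (hsgn : sgn = 1 ∨ sgn = -1)
    (f : ℝ → ℂ) (hf : Measurable f)
    (Ψ : 𝓗) (hΨ : MemLp (fun a => f (h a) * (U Ψ : X → ℂ) a) 2 μ) :
    (∃ g : ℝ → 𝓗, ∀ T : ℝ, 0 ≤ T →
      (U (g T) : X → ℂ) =ᵐ[μ] fun a =>
        f (h a) * Complex.exp (Complex.I * (T : ℂ) * ((sgn : ℂ) - Complex.I * (ε : ℂ)) *
          ((E₀ : ℂ) - (h a : ℂ))) * (U Ψ : X → ℂ) a) ∧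
    (∃ y₀ : 𝓗, (U y₀ : X → ℂ) =ᵐ[μ] fun a =>
      f E₀ * ({a : X | h a = E₀}.indicator (fun a => (U Ψ : X → ℂ) a) a)) ∧
    (∀ (g : ℝ → 𝓗) (y₀ : 𝓗),
      (∀ T : ℝ, 0 ≤ T →
        (U (g T) : X → ℂ) =ᵐ[μ] fun a =>
          f (h a) * Complex.exp (Complex.I * (T : ℂ) * ((sgn : ℂ) - Complex.I * (ε : ℂ)) *
            ((E₀ : ℂ) - (h a : ℂ))) * (U Ψ : X → ℂ) a) →
      ((U y₀ : X → ℂ) =ᵐ[μ] fun a =>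
        f E₀ * ({a : X | h a = E₀}.indicator (fun a => (U Ψ : X → ℂ) a) a)) →
      Tendsto g atTop (nhds y₀)) :=
  statement16_general μ h hh U c hbd E₀ hE₀ ε hε sgn f Ψ hΨ
end
end
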